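/- arXiv:1909.00530 — 7 statements merged into one kernel-verified Lean document; each statement's English description precedes it below -/
import Mathlib

section
/- Let G be a finite connected simple graph with minimum degree at least δ. For any vertex v of G and any integer r with 1 ≤ r ≤ ecc(v), the closed ball N_r(v) satisfies |N_r(v)| ≥ ⌊(r+2)/3⌋ · (δ + 1). -/
/-!
Pick a vertex `w` with `dist v w = ecc v ≥ r` and, along a shortest `v`–`w` path, vertices `u₀, …, u_{k-1}`
with `dist v uᵢ = 3i`, where `k = ⌊(r+2)/3⌋`. Any two of them are at distance at least `3`, so their closed
neighbourhoods are pairwise disjoint; each has at least `δ + 1` vertices, and all lie within distance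
`3(k-1) + 1 ≤ r` of `v`.
-/

noncomputable def eccent {V : Type} [Fintype V] (G : SimpleGraph V) (v : V) : ℕ :=
  Finset.univ.sup fun w => G.dist v w

open Finset

namespace SimpleGraph

variable {V : Type*} {G : SimpleGraph V}

lemma Reachable.exists_dist_eq_of_le {v w : V} (h : G.Reachable v w) {d : ℕ}
    (hd : d ≤ G.dist v w) : ∃ u, G.dist v u = d := by
  obtain ⟨p, hp⟩ := h.exists_walk_length_eq_dist
  refine ⟨p.getVert d, le_antisymm ?_ ?_⟩
  · exact (dist_le (p.take d)).trans ((p.take_length d).trans_le (min_le_left _ _))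
  · have hsplit : G.dist v w ≤ G.dist v (p.getVert d) + G.dist (p.getVert d) w :=
      Reachable.dist_triangle_left ⟨p.take d⟩ w
    have hrest : G.dist (p.getVert d) w ≤ G.dist v w - d := by
      simpa [hp] using dist_le (p.drop d)
    omega

section

variable [DecidableEq V] {a x : V} [Fintype (G.neighborSet a)]

lemma exists_walk_length_le_one_of_mem_insert_neighborFinset
    (hx : x ∈ insert a (G.neighborFinset a)) : ∃ p : G.Walk a x, p.length ≤ 1 := by
  rcases mem_insert.1 hx with rfl | hadj
  · exact ⟨.nil, by simp⟩
  · exact ⟨((G.mem_neighborFinset a x).1 hadj).toWalk, by simp⟩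

lemma dist_le_dist_add_one_of_mem_insert_neighborFinset
    (hx : x ∈ insert a (G.neighborFinset a)) (v : V) : G.dist v x ≤ G.dist v a + 1 := by
  obtain ⟨p, hp⟩ := exists_walk_length_le_one_of_mem_insert_neighborFinset hx
  have := Reachable.dist_triangle_right ⟨p⟩ v
  have := dist_le p
  omega

lemma disjoint_insert_neighborFinset_of_two_lt_dist {b : V} [Fintype (G.neighborSet b)]
    (hab : 2 < G.dist a b) :
    Disjoint (insert a (G.neighborFinset a)) (insert b (G.neighborFinset b)) := by
  refine Finset.disjoint_left.2 fun x hxa hxb => ?_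
  obtain ⟨p, hp⟩ := exists_walk_length_le_one_of_mem_insert_neighborFinset hxa
  obtain ⟨q, hq⟩ := exists_walk_length_le_one_of_mem_insert_neighborFinset hxb
  have := dist_le (p.append q.reverse)
  simp only [Walk.length_append, Walk.length_reverse] at this
  omega

end

lemma card_mul_minDegree_succ_le_card_biUnion [Fintype V] [DecidableEq V] [DecidableRel G.Adj]
    {ι : Type*} {s : Finset ι} {u : ι → V}
    (hu : (s : Set ι).Pairwise fun i j => 2 < G.dist (u i) (u j)) :
    #s * (G.minDegree + 1) ≤ #(s.biUnion fun i => insert (u i) (G.neighborFinset (u i))) := by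
  rw [card_biUnion fun i hi j hj hij => disjoint_insert_neighborFinset_of_two_lt_dist (hu hi hj hij),
    ← smul_eq_mul]
  refine card_nsmul_le_sum _ _ _ fun i _ => ?_
  rw [card_insert_of_notMem (G.notMem_neighborFinset_self _), card_neighborFinset_eq_degree]
  exact Nat.succ_le_succ (G.minDegree_le_degree _)

end SimpleGraph

theorem ball_card_lower_bound_general {V : Type} [Fintype V] (G : SimpleGraph V)
    [DecidableRel G.Adj] (hconn : G.Connected) (δ : ℕ) (hδ : δ ≤ G.minDegree)
    (v : V) (r : ℕ) (hr2 : r ≤ eccent G v) :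
    ((r + 2) / 3) * (δ + 1) ≤ {w : V | G.dist v w ≤ r}.ncard := by
  classical
  set k := (r + 2) / 3
  obtain ⟨w, -, hw⟩ := exists_mem_eq_sup univ ⟨v, mem_univ v⟩ (G.dist v ·)
  have hk : 3 * k ≤ r + 2 := Nat.mul_div_le (r + 2) 3
  have hcenters (i : Fin k) : ∃ u, G.dist v u = 3 * i :=
    (hconn v w).exists_dist_eq_of_le (by rw [eccent, hw] at hr2; omega)
  choose u hu using hcenters
  have hsep : (Set.univ : Set (Fin k)).Pairwise fun i j => 2 < G.dist (u i) (u j) := by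
    intro i _ j _ hij
    have hvj := hconn.dist_triangle (u := v) (v := u i) (w := u j)
    have hvi := hconn.dist_triangle (u := v) (v := u j) (w := u i)
    rw [SimpleGraph.dist_comm (u := u j)] at hvi
    have := Fin.val_ne_of_ne hij
    have := hu i
    have := hu j
    omega
  have hball : ((univ.biUnion fun i => insert (u i) (G.neighborFinset (u i)) : Finset V) : Set V) ⊆
      {x | G.dist v x ≤ r} := by
    simp only [coe_biUnion, coe_univ, Set.mem_univ, Set.iUnion_true, Set.iUnion_subset_iff]
    intro i x hx
    have := SimpleGraph.dist_le_dist_add_one_of_mem_insert_neighborFinset hx v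
    have := hu i
    have := i.isLt
    show G.dist v x ≤ r
    omega
  calc k * (δ + 1) ≤ #(univ : Finset (Fin k)) * (G.minDegree + 1) := by
        rw [card_univ, Fintype.card_fin]; gcongr
    _ ≤ _ := SimpleGraph.card_mul_minDegree_succ_le_card_biUnion (by simpa using hsep)
    _ = _ := (Set.ncard_coe_finset _).symm
    _ ≤ _ := Set.ncard_le_ncard hball

/-- For a finite connected simple graph `G` with minimum degree at least `δ`,
any vertex `v` and any `r` with `1 ≤ r ≤ ecc(v)`, the closed ball of radius `r`
around `v` has at least `⌊(r+2)/3⌋ * (δ+1)` vertices. -/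
theorem ball_card_lower_bound {V : Type} [Fintype V] (G : SimpleGraph V)
    [DecidableRel G.Adj] (hconn : G.Connected) (δ : ℕ) (hδ : δ ≤ G.minDegree)
    (v : V) (r : ℕ) (hr1 : 1 ≤ r) (hr2 : r ≤ eccent G v) :
    ((r + 2) / 3) * (δ + 1) ≤ {w : V | G.dist v w ≤ r}.ncard :=
  ball_card_lower_bound_general G hconn δ hδ v r hr2
end

section
/- Let G be a finite connected simple graph on n vertices with minimum degree at least δ. Suppose A is a set of vertices of G such that, for some integer r with 1 ≤ r ≤ rad(G), the distance between each pair of distinct vertices in A is greater than 2r. Then |A| ≤ 3n / (r(δ + 1)). -/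
/-- The radius of a graph: the minimum eccentricity over all vertices. -/
noncomputable def graphRadius {V : Type} [Fintype V] (G : SimpleGraph V) : ℕ :=
  sInf (Set.range (eccent G))

open Finset

namespace SimpleGraph

variable {V : Type*} {G : SimpleGraph V}

lemma Walk.dist_getVert_of_length_eq_dist {u v : V} {p : G.Walk u v}
    (hp : p.length = G.dist u v) (k : ℕ) : G.dist u (p.getVert k) = min k p.length :=
  (length_eq_dist_of_subwalk hp (p.isSubwalk_take k)).symm.trans (p.take_length k)

variable [Fintype V]

/-- Since `dist` is `0` between unreachable vertices, this is the metric ball only for connected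
`G`. -/
noncomputable def closedBall (G : SimpleGraph V) (c : V) (r : ℕ) : Finset V :=
  {v | G.dist c v ≤ r}

@[simp]
lemma mem_closedBall {c v : V} {r : ℕ} : v ∈ G.closedBall c r ↔ G.dist c v ≤ r := by
  simp [closedBall]

lemma degree_add_one_le_card_closedBall_one [DecidableRel G.Adj] (v : V) :
    G.degree v + 1 ≤ #(G.closedBall v 1) := by
  classical
  rw [← card_neighborFinset_eq_degree,
    ← card_insert_of_notMem (s := G.neighborFinset v) (a := v) (by simp)]
  refine card_le_card fun u hu => ?_
  rcases mem_insert.1 hu with rfl | hadj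
  · simp
  · exact mem_closedBall.2 (dist_eq_one_iff_adj.2 ((mem_neighborFinset G v u).1 hadj)).le

lemma Connected.disjoint_closedBall (hconn : G.Connected) {a b : V} {r s : ℕ}
    (h : r + s < G.dist a b) : Disjoint (G.closedBall a r) (G.closedBall b s) := by
  refine Finset.disjoint_left.2 fun v ha hb => ?_
  rw [mem_closedBall] at ha hb
  have := hconn.dist_triangle (u := a) (v := v) (w := b)
  rw [dist_comm (u := b)] at hb
  omega

lemma Connected.closedBall_subset_closedBall (hconn : G.Connected) {a b : V} {r s : ℕ}
    (h : G.dist a b + s ≤ r) : G.closedBall b s ⊆ G.closedBall a r := fun v hv => by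
  rw [mem_closedBall] at hv ⊢
  have := hconn.dist_triangle (u := a) (v := b) (w := v)
  omega

lemma Connected.sum_card_closedBall_le (hconn : G.Connected) {ι : Type*} {I : Finset ι}
    {c : ι → V} {s : ℕ} (hc : (I : Set ι).Pairwise fun i j => 2 * s < G.dist (c i) (c j))
    (T : Finset V) (hT : ∀ i ∈ I, G.closedBall (c i) s ⊆ T) :
    ∑ i ∈ I, #(G.closedBall (c i) s) ≤ #T := by
  classical
  rw [← card_biUnion fun i hi j hj hij =>
    hconn.disjoint_closedBall (by have := hc hi hj hij; omega)]
  exact card_le_card (biUnion_subset.2 hT)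

lemma Connected.mul_minDegree_add_one_le_three_mul_card_closedBall [DecidableRel G.Adj]
    (hconn : G.Connected) {a w : V} {r : ℕ} (hr : r ≤ G.dist a w) :
    r * (G.minDegree + 1) ≤ 3 * #(G.closedBall a r) := by
  obtain ⟨p, hp⟩ := hconn.exists_walk_length_eq_dist a w
  -- `m = ⌈r / 3⌉` counts the positions `3 i` with `3 i + 1 ≤ r`.
  set m := (r + 2) / 3 with hm
  set x : ℕ → V := fun i => p.getVert (3 * i)
  have hx : ∀ i < m, G.dist a (x i) = 3 * i := fun i hi => by
    rw [p.dist_getVert_of_length_eq_dist hp]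
    omega
  have hsep : (↑(range m) : Set ℕ).Pairwise fun i j => 2 * 1 < G.dist (x i) (x j) := by
    intro i hi j hj hij
    simp only [coe_range, Set.mem_Iio] at hi hj
    have hij' := hconn.dist_triangle (u := a) (v := x i) (w := x j)
    have hji' := hconn.dist_triangle (u := a) (v := x j) (w := x i)
    rw [dist_comm (u := x j)] at hji'
    rw [hx i hi, hx j hj] at hij' hji'
    omega
  have hsub : ∀ i ∈ range m, G.closedBall (x i) 1 ⊆ G.closedBall a r := fun i hi => by
    rw [mem_range] at hi
    exact hconn.closedBall_subset_closedBall (by rw [hx i hi]; omega)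
  calc r * (G.minDegree + 1) ≤ 3 * ∑ _i ∈ range m, (G.minDegree + 1) := by
        rw [sum_const, card_range, smul_eq_mul, ← mul_assoc]
        exact Nat.mul_le_mul_right _ (by omega)
    _ ≤ 3 * ∑ i ∈ range m, #(G.closedBall (x i) 1) := by
        gcongr with i
        exact (Nat.add_le_add_right (G.minDegree_le_degree _) 1).trans
          (degree_add_one_le_card_closedBall_one _)
    _ ≤ 3 * #(G.closedBall a r) := by
        gcongr
        exact hconn.sum_card_closedBall_le hsep _ hsub

end SimpleGraph

lemma graphRadius_le_eccent {V : Type} [Fintype V] (G : SimpleGraph V) (v : V) :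
    graphRadius G ≤ eccent G v :=
  Nat.sInf_le ⟨v, rfl⟩

lemma exists_le_dist_of_le_eccent {V : Type} [Fintype V] {G : SimpleGraph V} {v : V} {r : ℕ}
    (h : r ≤ eccent G v) : ∃ w, r ≤ G.dist v w := by
  obtain ⟨w, -, hw⟩ := exists_mem_eq_sup univ ⟨v, mem_univ v⟩ fun w => G.dist v w
  exact ⟨w, hw ▸ h⟩

/-- If `G` is a finite connected graph on `n` vertices with minimum degree at least `δ`,
and `A` is a set of vertices whose pairwise distances exceed `2r` for some
`1 ≤ r ≤ rad(G)`, then `|A| ≤ 3n / (r(δ+1))`. -/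
theorem scattered_set_card_upper_bound {V : Type} [Fintype V] (G : SimpleGraph V)
    [DecidableRel G.Adj] (hconn : G.Connected) (n δ : ℕ) (hn : Fintype.card V = n)
    (hδ : δ ≤ G.minDegree) (A : Finset V) (r : ℕ) (hr1 : 1 ≤ r) (hr2 : r ≤ graphRadius G)
    (hA : ∀ u ∈ A, ∀ v ∈ A, u ≠ v → 2 * r < G.dist u v) :
    (A.card : ℝ) ≤ 3 * n / (r * (δ + 1)) := by
  have hball : ∀ a, r * (δ + 1) ≤ 3 * #(G.closedBall a r) := fun a => by
    obtain ⟨w, hw⟩ := exists_le_dist_of_le_eccent (hr2.trans (graphRadius_le_eccent G a))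
    exact (Nat.mul_le_mul_left r (by omega)).trans
      (hconn.mul_minDegree_add_one_le_three_mul_card_closedBall hw)
  have hpack : ∑ a ∈ A, #(G.closedBall a r) ≤ n := by
    rw [← hn, ← card_univ]
    exact hconn.sum_card_closedBall_le (c := id) (fun u hu v hv huv => hA u hu v hv huv) univ
      fun _ _ => subset_univ _
  have key : #A * (r * (δ + 1)) ≤ 3 * n := by
    calc #A * (r * (δ + 1)) = ∑ _a ∈ A, r * (δ + 1) := by rw [sum_const, smul_eq_mul]
      _ ≤ ∑ a ∈ A, 3 * #(G.closedBall a r) := sum_le_sum fun a _ => hball a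
      _ ≤ 3 * n := by rw [← mul_sum]; omega
  rw [le_div_iff₀ (by positivity)]
  exact_mod_cast key
end

section
/- For every finite connected simple graph G on n vertices with minimum degree at least 23, the burning number of G is at most ⌈√n⌉. -/
/-- `a : Fin m → V` is a burning sequence of length `m` for `G`: the vertex activated
in round `i+1` is `a i`, and every vertex `v` must be within distance `m - (i+1)` of
some activator `a i`. -/
def IsBurningSeq {V : Type} (G : SimpleGraph V) (m : ℕ) (a : Fin m → V) : Prop :=
  ∀ v : V, ∃ i : Fin m, G.dist v (a i) ≤ m - (i.val + 1)

/-- The burning number of `G`: the least `m` for which `G` has a burning sequence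
of length `m`. -/
noncomputable def burningNumber {V : Type} (G : SimpleGraph V) : ℕ :=
  sInf {m : ℕ | ∃ a : Fin m → V, IsBurningSeq G m a}

/-!
If `G` cannot be burnt in `k` rounds, greedily light `x₀, x₁, …, x_k`, each still unburnt
by the fires of the earlier ones, so that `d(x_l, x_l') > k - 1 - l` for `l < l' ≤ k`. The balls
of radius `⌊(k - 1 - l)/2⌋` around the `x_l` with `l < k` are then pairwise disjoint. A ball of
radius `r` around `c` with some vertex at distance `≥ r` from `c` has at least `(δ + 1)⌈r/3⌉`
vertices: along a shortest path leaving it, the closed neighbourhoods of every third vertex are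
disjoint and stay inside. With `δ ≥ 23` these bounds sum to more than `k²` once `k ≥ 5`, which
is impossible when `k = ⌈√n⌉`; and `k ≥ 5` holds because `n ≥ δ + 1 ≥ 24`.
-/

open Finset

namespace SimpleGraph

variable {V : Type*} {G : SimpleGraph V}

theorem Walk.dist_getVert_getVert_of_length_eq_dist {u v : V} (p : G.Walk u v)
    (hp : p.length = G.dist u v) {i j : ℕ} (hij : i ≤ j) (hj : j ≤ p.length) :
    G.dist (p.getVert i) (p.getVert j) = j - i := by
  have hsub : ((p.drop i).take (j - i)).IsSubwalk p :=
    (isSubwalk_take _ _).trans (isSubwalk_drop _ _)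
  have := length_eq_dist_of_subwalk hp hsub
  simp only [take_length, drop_length, drop_getVert, Nat.add_sub_cancel' hij] at this
  omega

section closedBallFinset

variable [Fintype V]

noncomputable def closedBallFinset (G : SimpleGraph V) (c : V) (r : ℕ) : Finset V :=
  {v | G.dist c v ≤ r}

variable {c x y : V} {r s : ℕ}

@[simp]
theorem mem_closedBallFinset : y ∈ G.closedBallFinset c r ↔ G.dist c y ≤ r := by
  simp [closedBallFinset]

theorem Connected.disjoint_closedBallFinset (hG : G.Connected) (h : r + s < G.dist x y) :
    Disjoint (G.closedBallFinset x r) (G.closedBallFinset y s) := by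
  refine Finset.disjoint_left.mpr fun z hx hy => ?_
  have := hG.dist_triangle (u := x) (v := z) (w := y)
  have := dist_comm (G := G) (u := y) (v := z)
  simp only [mem_closedBallFinset] at hx hy
  omega

theorem Connected.closedBallFinset_subset (hG : G.Connected) (h : G.dist x y + s ≤ r) :
    G.closedBallFinset y s ⊆ G.closedBallFinset x r := by
  intro z hz
  have := hG.dist_triangle (u := x) (v := y) (w := z)
  simp only [mem_closedBallFinset] at hz ⊢
  omega

theorem degree_lt_card_closedBallFinset_one [DecidableRel G.Adj] (c : V) :
    G.degree c < #(G.closedBallFinset c 1) := by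
  classical
  have hsub : insert c (G.neighborFinset c) ⊆ G.closedBallFinset c 1 := by
    intro v hv
    rcases mem_insert.mp hv with rfl | hv
    · simp
    · simp [dist_eq_one_iff_adj.mpr ((mem_neighborFinset _ _ _).mp hv)]
  have := card_le_card hsub
  rw [card_insert_of_notMem (by simp), card_neighborFinset_eq_degree] at this
  omega

theorem Connected.le_card_closedBallFinset [DecidableRel G.Adj] (hG : G.Connected) {w : V}
    (hw : r ≤ G.dist c w) :
    (G.minDegree + 1) * ((r + 2) / 3) ≤ #(G.closedBallFinset c r) := by
  classical
  obtain ⟨p, hp⟩ := hG.exists_walk_length_eq_dist c w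
  set t := (r + 2) / 3
  have hpos : ∀ s < t, 3 * s + 1 ≤ r := fun s hs => by omega
  have hdist : ∀ s < t, G.dist c (p.getVert (3 * s)) = 3 * s := fun s hs => by
    simpa using p.dist_getVert_getVert_of_length_eq_dist hp (Nat.zero_le _) (by grind)
  have hdisj : (range t : Set ℕ).PairwiseDisjoint
      fun s => G.closedBallFinset (p.getVert (3 * s)) 1 := by
    intro s hs s' hs' hne
    wlog h : s < s' generalizing s s'
    · exact (this hs' hs hne.symm (by omega)).symm
    refine hG.disjoint_closedBallFinset ?_
    rw [p.dist_getVert_getVert_of_length_eq_dist hp (by omega) (by grind)]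
    omega
  calc (G.minDegree + 1) * t = ∑ _s ∈ range t, (G.minDegree + 1) := by simp [mul_comm]
    _ ≤ ∑ s ∈ range t, #(G.closedBallFinset (p.getVert (3 * s)) 1) :=
      sum_le_sum fun s _ => (G.minDegree_le_degree _).trans_lt
        (degree_lt_card_closedBallFinset_one _)
    _ = #((range t).biUnion fun s => G.closedBallFinset (p.getVert (3 * s)) 1) :=
      (card_biUnion hdisj).symm
    _ ≤ #(G.closedBallFinset c r) := by
      refine card_le_card (biUnion_subset.mpr fun s hs => hG.closedBallFinset_subset ?_)
      rw [hdist s (mem_range.mp hs)]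
      exact hpos s (mem_range.mp hs)

end closedBallFinset

end SimpleGraph

open SimpleGraph

section burning

variable {V : Type} {G : SimpleGraph V}

theorem exists_separated_of_not_isBurningSeq [Nonempty V] {k : ℕ}
    (h : ¬ ∃ a : Fin k → V, IsBurningSeq G k a) :
    ∃ x : ℕ → V, ∀ l l', l < l' → l' ≤ k → k - (l + 1) < G.dist (x l') (x l) := by
  suffices ∀ i ≤ k, ∃ x : ℕ → V,
      ∀ l l', l < l' → l' ≤ i → k - (l + 1) < G.dist (x l') (x l) from this k le_rfl
  intro i
  induction i with
  | zero => exact fun _ => ⟨fun _ => Classical.arbitrary V, fun l l' hl hl' => by omega⟩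
  | succ i ih =>
    intro hi
    obtain ⟨x, hx⟩ := ih (by omega)
    obtain ⟨w, hw⟩ : ∃ w : V, ∀ l ≤ i, k - (l + 1) < G.dist w (x l) := by
      by_contra! hcov
      refine h ⟨fun j => x j, fun v => ?_⟩
      obtain ⟨l, hl, hv⟩ := hcov v
      exact ⟨⟨l, by omega⟩, hv⟩
    refine ⟨Function.update x (i + 1) w, fun l l' hl hl' => ?_⟩
    rcases Nat.lt_or_ge l' (i + 1) with h' | h'
    · simpa [Function.update_apply, show l' ≠ i + 1 by omega, show l ≠ i + 1 by omega]
        using hx l l' hl (by omega)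
    · simpa [Function.update_apply, show l' = i + 1 by omega, show l ≠ i + 1 by omega]
        using hw l (by omega)

theorem mul_self_lt_sum_range_ball_bound {k : ℕ} (hk : 5 ≤ k) :
    k * k < ∑ m ∈ range k, 24 * ((m / 2 + 2) / 3) := by
  induction k, hk using Nat.le_induction with
  | base => decide
  | succ k hk ih =>
    have : 2 * k + 1 ≤ 24 * ((k / 2 + 2) / 3) := by omega
    rw [sum_range_succ]
    linarith [show (k + 1) * (k + 1) = k * k + 2 * k + 1 by ring]

variable [Fintype V] [DecidableRel G.Adj]

theorem exists_isBurningSeq_of_card_le (hG : G.Connected) (hδ : 23 ≤ G.minDegree) {k : ℕ}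
    (hk : 5 ≤ k) (hV : Fintype.card V ≤ k * k) : ∃ a : Fin k → V, IsBurningSeq G k a := by
  classical
  by_contra h
  have := hG.nonempty
  obtain ⟨x, hx⟩ := exists_separated_of_not_isBurningSeq h
  set B : ℕ → Finset V := fun l => G.closedBallFinset (x l) ((k - (l + 1)) / 2)
  have hdisj : (range k : Set ℕ).PairwiseDisjoint B := by
    intro l hl l' hl' hne
    wlog h : l < l' generalizing l l'
    · exact (this hl' hl hne.symm (by omega)).symm
    have := hx l l' h (mem_range.mp hl').le
    exact hG.disjoint_closedBallFinset (by rw [dist_comm]; omega)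
  have hcard : ∀ l < k, 24 * (((k - (l + 1)) / 2 + 2) / 3) ≤ #(B l) := fun l hl => by
    have := hx l k hl le_rfl
    exact le_trans (Nat.mul_le_mul_right _ (by omega))
      (hG.le_card_closedBallFinset (w := x k) (by rw [dist_comm]; omega))
  have := calc
    k * k < ∑ m ∈ range k, 24 * ((m / 2 + 2) / 3) := mul_self_lt_sum_range_ball_bound hk
    _ = ∑ l ∈ range k, 24 * (((k - (l + 1)) / 2 + 2) / 3) := by
      rw [← sum_range_reflect]
      exact sum_congr rfl fun l _ => by rw [Nat.sub_sub, Nat.add_comm 1 l]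
    _ ≤ ∑ l ∈ range k, #(B l) := sum_le_sum fun l hl => hcard l (mem_range.mp hl)
    _ = #((range k).biUnion B) := (card_biUnion hdisj).symm
    _ ≤ Fintype.card V := card_le_univ _
    _ ≤ k * k := hV
  exact lt_irrefl _ this

end burning

/-- Every finite connected graph on `n` vertices with minimum degree at least `23`
has burning number at most `⌈√n⌉`. -/
theorem burning_number_le_of_min_degree {V : Type} [Fintype V] (G : SimpleGraph V)
    [DecidableRel G.Adj] (hconn : G.Connected) (n : ℕ) (hn : Fintype.card V = n)
    (hδ : 23 ≤ G.minDegree) :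
    burningNumber G ≤ ⌈Real.sqrt (n : ℝ)⌉₊ := by
  have hn24 : 24 ≤ n := by
    obtain ⟨v⟩ := hconn.nonempty
    have := (G.minDegree_le_degree v).trans_lt (G.degree_lt_card_closedBallFinset_one v)
    have := card_le_univ (G.closedBallFinset v 1)
    omega
  have hk : 5 ≤ ⌈Real.sqrt n⌉₊ := by
    have : (24 : ℝ) ≤ n := by exact_mod_cast hn24
    exact Nat.lt_ceil.mpr ((Real.lt_sqrt (by norm_num)).mpr (by norm_num; linarith))
  have hnk : n ≤ ⌈Real.sqrt n⌉₊ * ⌈Real.sqrt n⌉₊ := by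
    have := (Real.sqrt_le_iff.mp (Nat.le_ceil (Real.sqrt n))).2
    exact_mod_cast (by nlinarith : (n : ℝ) ≤ ⌈Real.sqrt n⌉₊ * ⌈Real.sqrt n⌉₊)
  exact Nat.sInf_le (exists_isBurningSeq_of_card_le hconn hδ hk (hn ▸ hnk))
end

section
/- For any finite connected simple graph G and any rooted tree decomposition T' of G, there exists a trimmed rooted tree decomposition T of G whose length is at most the length of T'. -/
/-- A tree decomposition of a simple graph `G` indexed by `ι`: a tree on `ι`
together with a bag of vertices for each node, such that every vertex lies in some
bag, every edge is contained in some bag, and for every vertex `v` the set of nodes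
whose bag contains `v` induces a (connected) subtree: every node on the unique path
between two nodes whose bags contain `v` also contains `v`. -/
structure TreeDecomp {V : Type} (G : SimpleGraph V) (ι : Type) where
  tree : SimpleGraph ι
  isTree : tree.IsTree
  bag : ι → Set V
  bag_cover : ∀ v : V, ∃ i : ι, v ∈ bag i
  bag_edge : ∀ u v : V, G.Adj u v → ∃ i : ι, u ∈ bag i ∧ v ∈ bag i
  bag_conn : ∀ (v : V) (i j : ι), v ∈ bag i → v ∈ bag j →
    ∀ p : tree.Walk i j, p.IsPath → ∀ k ∈ p.support, v ∈ bag k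

/-- In the decomposition tree rooted at `root`, node `j` belongs to the subtree
rooted at `B` iff `B` lies on every walk from `root` to `j` (equivalently, `B` is
on the unique path from the root to `j`). -/
def TreeDecomp.InSubtree {V ι : Type} {G : SimpleGraph V} (D : TreeDecomp G ι)
    (root B j : ι) : Prop :=
  ∀ p : D.tree.Walk root j, B ∈ p.support

/-- A rooted tree decomposition is trimmed if for every non-root bag `B` there is a
vertex of `G` contained in some bag of the subtree rooted at `B` and in no bag
outside that subtree. -/
def TreeDecomp.Trimmed {V ι : Type} {G : SimpleGraph V} (D : TreeDecomp G ι)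
    (root : ι) : Prop :=
  ∀ B : ι, B ≠ root → ∃ v : V,
    (∃ j : ι, D.InSubtree root B j ∧ v ∈ D.bag j) ∧
    ∀ j : ι, ¬ D.InSubtree root B j → v ∉ D.bag j

/-- The decomposition has length at most `k`: any two vertices in a common bag are
at distance at most `k` in `G`. -/
def TreeDecomp.LengthLE {V ι : Type} {G : SimpleGraph V} (D : TreeDecomp G ι)
    (k : ℕ) : Prop :=
  ∀ i : ι, ∀ u ∈ D.bag i, ∀ v ∈ D.bag i, G.dist u v ≤ k

/-!
If a rooted tree decomposition is not trimmed, there is a non-root node `B` such that every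
vertex seen in the subtree below `B` is also seen outside it. Deleting that subtree leaves a
tree decomposition: the remaining nodes still induce a tree and still cover every vertex, and an
edge whose endpoints were only seen together below `B` lies in the bag of the parent of `B`,
because the parent separates the two sides and each endpoint occurs on both. The new bags are
old bags, so the length does not grow, and induction on the number of nodes finishes the proof.
-/

open SimpleGraph

lemma SimpleGraph.IsAcyclic.eq_of_adj_of_notMem_support {V : Type*} {G : SimpleGraph V}
    (hG : G.IsAcyclic) {b x y : V} (hx : G.Adj b x) (hy : G.Adj b y) (p : G.Walk x y)
    (hb : b ∉ p.support) : x = y := by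
  classical
  have hpath : (Walk.cons hx p.bypass).IsPath :=
    (Walk.cons_isPath_iff _ _).mpr
      ⟨p.bypass_isPath, fun h => hb (p.support_bypass_subset_support h)⟩
  simpa using (hG.eq_snd_of_adj_start hpath hy (Walk.end_mem_support _)).symm

namespace TreeDecomp

variable {V ι : Type} {G : SimpleGraph V}

def restrict (D : TreeDecomp G ι) (S : Set ι) (hS : (D.tree.induce S).Connected)
    (hcover : ∀ v, ∃ i ∈ S, v ∈ D.bag i)
    (hedge : ∀ u v, G.Adj u v → ∃ i ∈ S, u ∈ D.bag i ∧ v ∈ D.bag i) : TreeDecomp G S where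
  tree := D.tree.induce S
  isTree := ⟨hS, D.isTree.isAcyclic.induce S⟩
  bag i := D.bag i
  bag_cover v :=
    let ⟨i, hi, hv⟩ := hcover v
    ⟨⟨i, hi⟩, hv⟩
  bag_edge u v huv :=
    let ⟨i, hi, hu, hv⟩ := hedge u v huv
    ⟨⟨i, hi⟩, hu, hv⟩
  bag_conn v i j hvi hvj p hp k hk :=
    D.bag_conn v i j hvi hvj (p.map (Embedding.induce S).toHom)
      (hp.map Subtype.val_injective) k
      (p.support_map (Embedding.induce S).toHom ▸ List.mem_map_of_mem hk)

theorem LengthLE.of_forall_exists_bag_subset {κ : Type} {D : TreeDecomp G ι}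
    {E : TreeDecomp G κ} {k : ℕ} (hD : D.LengthLE k) (hsub : ∀ i, ∃ j, E.bag i ⊆ D.bag j) :
    E.LengthLE k := fun i u hu v hv =>
  let ⟨j, hj⟩ := hsub i
  hD j u (hj hu) v (hj hv)

section InSubtree

variable (D : TreeDecomp G ι) {root B : ι}

theorem inSubtree_self : D.InSubtree root B B := fun p => p.end_mem_support

theorem not_inSubtree_iff {j : ι} :
    ¬ D.InSubtree root B j ↔ ∃ p : D.tree.Walk root j, B ∉ p.support := by
  simp [InSubtree]

theorem connected_induce_not_inSubtree (hB : B ≠ root) :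
    (D.tree.induce {j | ¬ D.InSubtree root B j}).Connected := by
  classical
  have hroot : ¬ D.InSubtree root B root := fun h => hB (by simpa using h .nil)
  refine D.tree.induce_connected_of_patches root hroot fun {j} hj => ?_
  obtain ⟨p, hp⟩ := D.not_inSubtree_iff.mp hj
  refine ⟨{k | k ∈ p.support}, fun k hk => ?_, p.start_mem_support, p.end_mem_support,
    p.connected_induce_support.preconnected _ _⟩
  exact D.not_inSubtree_iff.mpr
    ⟨p.takeUntil k hk, fun h => hp (p.support_takeUntil_subset_support hk h)⟩

theorem eq_of_adj_of_not_inSubtree {x y : ι} (hx : D.tree.Adj B x) (hy : D.tree.Adj B y)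
    (hx' : ¬ D.InSubtree root B x) (hy' : ¬ D.InSubtree root B y) : x = y := by
  obtain ⟨p, hp⟩ := D.not_inSubtree_iff.mp hx'
  obtain ⟨q, hq⟩ := D.not_inSubtree_iff.mp hy'
  exact D.isTree.isAcyclic.eq_of_adj_of_notMem_support hx hy (p.reverse.append q)
    (by simp [Walk.mem_support_append_iff, hp, hq])

theorem exists_adj_not_inSubtree_mem_support {i j : ι} (hj : ¬ D.InSubtree root B j)
    (hi : D.InSubtree root B i) (c : D.tree.Walk j i) :
    ∃ x ∈ c.support, D.tree.Adj B x ∧ ¬ D.InSubtree root B x := by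
  classical
  obtain ⟨p, hp⟩ := D.not_inSubtree_iff.mp hj
  have hBc : B ∈ c.support := by
    simpa [Walk.mem_support_append_iff, hp] using hi (p.append c)
  obtain ⟨d, hd, hdc⟩ : ∃ d : D.tree.Walk B j, d.IsPath ∧ d.support ⊆ c.support :=
    ⟨(c.takeUntil B hBc).reverse.bypass, Walk.bypass_isPath _, fun k hk => by
      have := (c.takeUntil B hBc).reverse.support_bypass_subset_support hk
      rw [Walk.support_reverse, List.mem_reverse] at this
      exact c.support_takeUntil_subset_support hBc this⟩
  cases d with
  | nil => exact absurd D.inSubtree_self hj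
  | cons hBx d' =>
    have hBd' : B ∉ d'.support := ((Walk.cons_isPath_iff _ _).mp hd).2
    refine ⟨_, hdc (by simp), hBx, D.not_inSubtree_iff.mpr ⟨p.append d'.reverse, ?_⟩⟩
    simp [Walk.mem_support_append_iff, hp, hBd']

theorem exists_adj_not_inSubtree_mem_bag {i j : ι} {v : V} (hvj : v ∈ D.bag j)
    (hvi : v ∈ D.bag i) (hj : ¬ D.InSubtree root B j) (hi : D.InSubtree root B i) :
    ∃ x, D.tree.Adj B x ∧ ¬ D.InSubtree root B x ∧ v ∈ D.bag x := by
  classical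
  obtain ⟨c⟩ := D.isTree.connected.preconnected j i
  obtain ⟨x, hxc, hBx, hx⟩ := D.exists_adj_not_inSubtree_mem_support hj hi c.bypass
  exact ⟨x, hBx, hx, D.bag_conn v j i hvj hvi c.bypass c.bypass_isPath x hxc⟩

end InSubtree

theorem exists_proper_restrict_of_not_trimmed (D : TreeDecomp G ι) {root : ι}
    (h : ¬ D.Trimmed root) :
    ∃ (S : Set ι) (E : TreeDecomp G S), S ≠ Set.univ ∧ ∀ i, E.bag i = D.bag i := by
  obtain ⟨B, hB, hout⟩ : ∃ B ≠ root, ∀ v, (∃ j, D.InSubtree root B j ∧ v ∈ D.bag j) →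
      ∃ j, ¬ D.InSubtree root B j ∧ v ∈ D.bag j := by
    simpa [Trimmed] using h
  have hcover : ∀ v, ∃ j ∈ {j | ¬ D.InSubtree root B j}, v ∈ D.bag j := fun v => by
    obtain ⟨i, hvi⟩ := D.bag_cover v
    by_cases hi : D.InSubtree root B i
    · exact hout v ⟨i, hi, hvi⟩
    · exact ⟨i, hi, hvi⟩
  have hedge : ∀ u v, G.Adj u v →
      ∃ j ∈ {j | ¬ D.InSubtree root B j}, u ∈ D.bag j ∧ v ∈ D.bag j := fun u v huv => by
    obtain ⟨i, hui, hvi⟩ := D.bag_edge u v huv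
    by_cases hi : D.InSubtree root B i
    · obtain ⟨ju, hju, huju⟩ := hout u ⟨i, hi, hui⟩
      obtain ⟨jv, hjv, hvjv⟩ := hout v ⟨i, hi, hvi⟩
      obtain ⟨x, hBx, hx, hux⟩ := D.exists_adj_not_inSubtree_mem_bag huju hui hju hi
      obtain ⟨y, hBy, hy, hvy⟩ := D.exists_adj_not_inSubtree_mem_bag hvjv hvi hjv hi
      obtain rfl := D.eq_of_adj_of_not_inSubtree hBx hBy hx hy
      exact ⟨x, hx, hux, hvy⟩
    · exact ⟨i, hi, hui, hvi⟩
  refine ⟨_, D.restrict _ (D.connected_induce_not_inSubtree hB) hcover hedge,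
    (Set.ne_univ_iff_exists_notMem _).mpr ⟨B, fun hB' => hB' D.inSubtree_self⟩, fun _ => rfl⟩

theorem exists_trimmed_forall_exists_bag_subset [Finite ι] (D : TreeDecomp G ι) :
    ∃ (κ : Type) (E : TreeDecomp G κ) (root : κ),
      E.Trimmed root ∧ ∀ i, ∃ j, E.bag i ⊆ D.bag j := by
  induction h : Nat.card ι using Nat.strong_induction_on generalizing ι with
  | _ n ih =>
  obtain ⟨root⟩ := D.isTree.connected.nonempty
  by_cases htrim : D.Trimmed root
  · exact ⟨ι, D, root, htrim, fun i => ⟨i, subset_rfl⟩⟩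
  obtain ⟨S, E, hS, hbag⟩ := D.exists_proper_restrict_of_not_trimmed htrim
  obtain ⟨B, hB⟩ := (Set.ne_univ_iff_exists_notMem S).mp hS
  obtain ⟨κ, F, r, hF, hsub⟩ := ih _ (h ▸ Finite.card_subtype_lt hB) E rfl
  exact ⟨κ, F, r, hF, fun i => let ⟨j, hj⟩ := hsub i; ⟨j, hbag j ▸ hj⟩⟩

end TreeDecomp

theorem exists_trimmed_tree_decomp_general {V ι : Type} [Fintype ι]
    (G : SimpleGraph V) (D : TreeDecomp G ι) :
    ∃ (κ : Type) (E : TreeDecomp G κ) (root' : κ),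
      E.Trimmed root' ∧ ∀ k : ℕ, D.LengthLE k → E.LengthLE k := by
  obtain ⟨κ, E, root', htrim, hsub⟩ := D.exists_trimmed_forall_exists_bag_subset
  exact ⟨κ, E, root', htrim, fun _ hD => hD.of_forall_exists_bag_subset hsub⟩

/-- For any finite connected graph `G` and any rooted tree decomposition of `G`,
there is a trimmed rooted tree decomposition of `G` whose length is at most the
length of the original one. -/
theorem exists_trimmed_tree_decomp {V ι : Type} [Fintype V] [Fintype ι]
    (G : SimpleGraph V) (hconn : G.Connected) (D : TreeDecomp G ι) (root : ι) :
    ∃ (κ : Type) (E : TreeDecomp G κ) (root' : κ),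
      E.Trimmed root' ∧ ∀ k : ℕ, D.LengthLE k → E.LengthLE k :=
  exists_trimmed_tree_decomp_general G D
end

section
/- Let T be a trimmed rooted tree decomposition (or a path decomposition) of a finite connected simple graph G. Let u and v be vertices of G, let B_u be a bag of T containing u, and let B_v be a bag of T containing v. If P is a shortest path between u and v in G, then every bag on the (unique) shortest path in T between B_u and B_v contains at least one vertex of P. -/
/-!
A bag `B` on the tree path between `B_u` and `B_v` separates `u` from `v`: if some walk
from `u` to `v` avoided `B`, the bags of its vertices, chained along its edges, would give
a tree walk from `B_u` to `B_v` avoiding `B`, since the bags containing a vertex outside `B`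
form a subtree not containing `B`.
-/

namespace TreeDecomp

variable {V ι : Type} {G : SimpleGraph V} (D : TreeDecomp G ι)

theorem exists_walk_avoiding_of_mem_bag {B : ι} {x : V} (hx : x ∉ D.bag B) {i j : ι}
    (hi : x ∈ D.bag i) (hj : x ∈ D.bag j) :
    ∃ p : D.tree.Walk i j, B ∉ p.support := by
  classical
  obtain ⟨p⟩ := D.isTree.1 i j
  exact ⟨p.toPath, fun hB => hx (D.bag_conn x i j hi hj p.toPath p.toPath.2 B hB)⟩

theorem exists_walk_avoiding_of_walk_avoiding {B : ι} {a b : V} (W : G.Walk a b)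
    (hW : ∀ x ∈ W.support, x ∉ D.bag B) {i j : ι} (hi : a ∈ D.bag i) (hj : b ∈ D.bag j) :
    ∃ p : D.tree.Walk i j, B ∉ p.support := by
  induction W generalizing i with
  | nil => exact D.exists_walk_avoiding_of_mem_bag (hW _ (by simp)) hi hj
  | @cons a c b hadj W ih =>
    obtain ⟨k, hak, hck⟩ := D.bag_edge a c hadj
    obtain ⟨p, hp⟩ := D.exists_walk_avoiding_of_mem_bag (hW a (by simp)) hi hak
    obtain ⟨q, hq⟩ := ih (fun x hx => hW x (by simp [hx])) hck hj
    refine ⟨p.append q, ?_⟩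
    rw [SimpleGraph.Walk.mem_support_append_iff]
    exact not_or_intro hp hq

end TreeDecomp

theorem bag_on_path_meets_shortest_path_general {V ι : Type}
    (G : SimpleGraph V) (D : TreeDecomp G ι) (u v : V) (Bu Bv : ι)
    (hu : u ∈ D.bag Bu) (hv : v ∈ D.bag Bv)
    (P : G.Walk u v) :
    ∀ B : ι, (∀ q : D.tree.Walk Bu Bv, B ∈ q.support) →
      ∃ x ∈ P.support, x ∈ D.bag B := by
  intro B hB
  by_contra! hP
  obtain ⟨q, hq⟩ := D.exists_walk_avoiding_of_walk_avoiding P hP hu hv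
  exact hq (hB q)

/-- Let `T` be a trimmed rooted tree decomposition of a finite connected graph `G`,
let `u ∈ B_u` and `v ∈ B_v`, and let `P` be a shortest path between `u` and `v` in
`G`. Then every bag on the unique path in the decomposition tree between `B_u` and
`B_v` (i.e. every node lying on all walks from `B_u` to `B_v`) contains a vertex
of `P`. -/
theorem bag_on_path_meets_shortest_path {V ι : Type} [Fintype V] [Fintype ι]
    (G : SimpleGraph V) (hconn : G.Connected) (D : TreeDecomp G ι) (root : ι)
    (htrim : D.Trimmed root) (u v : V) (Bu Bv : ι)
    (hu : u ∈ D.bag Bu) (hv : v ∈ D.bag Bv)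
    (P : G.Walk u v) (hP : P.IsPath) (hlen : P.length = G.dist u v) :
    ∀ B : ι, (∀ q : D.tree.Walk Bu Bv, B ∈ q.support) →
      ∃ x ∈ P.support, x ∈ D.bag B :=
  bag_on_path_meets_shortest_path_general G D u v Bu Bv hu hv P
end

section
/- Let n_1 and n_2 be integers with 2 ≤ n_1 ≤ n_2, and let G be the n_1 × n_2 grid graph, i.e., the Cartesian (box) product of a path graph on n_1 vertices and a path graph on n_2 vertices. Then G has a burning sequence of length ⌈√(n_1 + n_2 − 3)⌉ + n_1. -/
open SimpleGraph

lemma SimpleGraph.dist_boxProd {V W : Type} {G : SimpleGraph V} {H : SimpleGraph W}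
    {x y : V × W} (h₁ : G.Reachable x.1 y.1) (h₂ : H.Reachable x.2 y.2) :
    (G □ H).dist x y = G.dist x.1 y.1 + H.dist x.2 y.2 := by
  simp only [dist, edist_boxProd]
  exact ENat.toNat_add (edist_ne_top_iff_reachable.2 h₁) (edist_ne_top_iff_reachable.2 h₂)

lemma SimpleGraph.pathGraph_dist_le {n : ℕ} (i j : Fin n) :
    (pathGraph n).dist i j ≤ Nat.dist i j := by
  have : Nonempty (Fin n) := ⟨i⟩
  have hconn : (pathGraph n).Connected := ⟨pathGraph_preconnected n⟩
  have dist_le_of_add :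
      ∀ (d : ℕ) (i j : Fin n), i.val + d = j.val → (pathGraph n).dist i j ≤ d := by
    intro d
    induction d with
    | zero => intro i j h; simp [Fin.ext (by omega : i.val = j.val)]
    | succ d ih =>
      intro i j h
      let k : Fin n := ⟨i.val + d, by omega⟩
      have hkj : (pathGraph n).Adj k j :=
        pathGraph_adj.2 (Or.inl (by show i.val + d + 1 = j.val; omega))
      calc (pathGraph n).dist i j ≤ (pathGraph n).dist i k + (pathGraph n).dist k j :=
            hconn.dist_triangle
        _ ≤ d + 1 := add_le_add (ih i k rfl) (dist_eq_one_iff_adj.2 hkj).le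
  rcases le_total i.val j.val with h | h
  · simpa [Nat.dist, Nat.sub_eq_zero_of_le h] using dist_le_of_add (j - i) i j (by omega)
  · rw [dist_comm]
    simpa [Nat.dist, Nat.sub_eq_zero_of_le h] using dist_le_of_add (i - j) j i (by omega)

/-- The burner lit in round `i + 1` of `m` rounds has radius `r = m - 1 - i`; it is placed at the
centre of the block `[m² - (r + 1)², m² - r²)` of `2r + 1` consecutive integers. These blocks
tile `[0, m²)`. -/
def pathBurnCenter (m i : ℕ) : ℕ := m ^ 2 - (m - i) ^ 2 + (m - 1 - i)

lemma exists_dist_pathBurnCenter_le {m c : ℕ} (hc : c < m ^ 2) :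
    ∃ i < m, Nat.dist c (pathBurnCenter m i) ≤ m - 1 - i := by
  set d := m ^ 2 - 1 - c
  set r := Nat.sqrt d
  have hrm : r < m := Nat.sqrt_lt'.2 (by omega)
  have hlo : r ^ 2 ≤ d := Nat.sqrt_le' d
  have hhi : d < (r + 1) ^ 2 := Nat.lt_succ_sqrt' d
  have hsq : (r + 1) ^ 2 = r ^ 2 + 2 * r + 1 := by ring
  have hmono : (r + 1) ^ 2 ≤ m ^ 2 := Nat.pow_le_pow_left hrm 2
  refine ⟨m - 1 - r, by omega, ?_⟩
  rw [pathBurnCenter, show m - (m - 1 - r) = r + 1 by omega, show m - 1 - (m - 1 - r) = r by omega]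
  simp only [Nat.dist]
  omega

theorem exists_isBurningSeq_pathGraph {n m : ℕ} (hn : 0 < n) (hnm : n ≤ m ^ 2) :
    ∃ a : Fin m → Fin n, IsBurningSeq (pathGraph n) m a := by
  refine ⟨fun i => ⟨min (pathBurnCenter m i) (n - 1), by omega⟩, fun c => ?_⟩
  obtain ⟨i, hi, hc⟩ := exists_dist_pathBurnCenter_le (c.2.trans_le hnm)
  refine ⟨⟨i, hi⟩, (pathGraph_dist_le _ _).trans ?_⟩
  simp only [Nat.dist] at hc ⊢
  omega

theorem IsBurningSeq.exists_boxProd {V W : Type} {G : SimpleGraph V} {H : SimpleGraph W}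
    [Nonempty W] (hG : G.Preconnected) (hH : H.Preconnected) {g₀ : V} {e : ℕ}
    (he : ∀ g, G.dist g g₀ ≤ e) {m : ℕ} {a : Fin m → W} (ha : IsBurningSeq H m a) :
    ∃ b : Fin (m + e) → V × W, IsBurningSeq (G □ H) (m + e) b := by
  refine ⟨fun i => (g₀, Fin.append a (fun _ => Classical.arbitrary W) i),
    fun ⟨g, h⟩ => ?_⟩
  obtain ⟨i, hi⟩ := ha h
  refine ⟨Fin.castAdd e i, ?_⟩
  calc (G □ H).dist (g, h) (g₀, Fin.append a _ (Fin.castAdd e i))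
      = G.dist g g₀ + H.dist h (a i) := by
        rw [Fin.append_left]; exact dist_boxProd (hG _ _) (hH _ _)
    _ ≤ e + (m - (i + 1)) := add_le_add (he g) hi
    _ = m + e - (i + 1) := by omega

lemma le_natCeil_sqrt_sq (x : ℝ) : x ≤ (⌈√x⌉₊ : ℝ) ^ 2 := by
  rcases le_total x 0 with hx | hx
  · exact hx.trans (by positivity)
  · calc x = √x ^ 2 := (Real.sq_sqrt hx).symm
      _ ≤ (⌈√x⌉₊ : ℝ) ^ 2 := by gcongr; exact Nat.le_ceil _

/-- The `n₁ × n₂` grid graph (the box product of the path graphs on `n₁` and `n₂`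
vertices, with `2 ≤ n₁ ≤ n₂`) has a burning sequence of length
`⌈√(n₁ + n₂ - 3)⌉ + n₁`. -/
theorem burning_seq_grid (n₁ n₂ : ℕ) (h1 : 2 ≤ n₁) (h2 : n₁ ≤ n₂) :
    ∃ a : Fin (⌈Real.sqrt ((n₁ : ℝ) + n₂ - 3)⌉₊ + n₁) → Fin n₁ × Fin n₂,
      IsBurningSeq ((SimpleGraph.pathGraph n₁).boxProd (SimpleGraph.pathGraph n₂))
        (⌈Real.sqrt ((n₁ : ℝ) + n₂ - 3)⌉₊ + n₁) a := by
  set k := ⌈Real.sqrt ((n₁ : ℝ) + n₂ - 3)⌉₊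
  have hn₂ : n₂ ≤ (k + 1) ^ 2 := by
    have hk : (n₁ : ℝ) + n₂ - 3 ≤ (k : ℝ) ^ 2 := le_natCeil_sqrt_sq _
    have h1' : (2 : ℝ) ≤ n₁ := by exact_mod_cast h1
    have hreal : (n₂ : ℝ) ≤ k ^ 2 + 1 := by linarith
    have hnat : n₂ ≤ k ^ 2 + 1 := by exact_mod_cast hreal
    exact hnat.trans (by rw [add_sq]; omega)
  obtain ⟨a, ha⟩ := exists_isBurningSeq_pathGraph (by omega) hn₂
  have : Nonempty (Fin n₂) := ⟨⟨0, by omega⟩⟩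
  have hecc (r : Fin n₁) : (pathGraph n₁).dist r ⟨0, by omega⟩ ≤ n₁ - 1 :=
    (pathGraph_dist_le _ _).trans (by simp only [Nat.dist]; omega)
  have hgrid := ha.exists_boxProd (pathGraph_preconnected n₁) (pathGraph_preconnected n₂) hecc
  rwa [show k + 1 + (n₁ - 1) = k + n₁ by omega] at hgrid
end

section
/- Let T be a trimmed rooted tree decomposition of a finite connected simple graph G, of length at most tl, and let g ≥ 1 be an integer. Let t be a vertex of G, let B be a bag of T containing t, and let B' be a strict ancestor of B in T such that the child C of B' lying on the path in T from B to B' contains some vertex v with dist(v, t) ≤ g − 1. Then every vertex u ∈ B' satisfies dist(u, t) ≤ g + 2·tl − 1. -/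
/-!
Bags at adjacent nodes `B'`, `C` of the decomposition tree always meet when `G` is connected
and both bags are nonempty: otherwise the vertices having a bag on the `C`-side of the edge
`B'C` would form a nonempty set closed under adjacency that misses `B'`. A common vertex `w`
of `B'` and `C` then gives `dist(u, t) ≤ dist(u, w) + dist(w, v) + dist(v, t) ≤ 2·tl + g - 1`.
-/

namespace TreeDecomp

variable {V ι : Type} {G : SimpleGraph V} (D : TreeDecomp G ι)

theorem mem_bag_of_inSubtree_of_not_inSubtree {r c i j : ι} (hi : D.InSubtree r c i)
    (hj : ¬ D.InSubtree r c j) {x : V} (hxi : x ∈ D.bag i) (hxj : x ∈ D.bag j) :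
    x ∈ D.bag c := by
  classical
  obtain ⟨q, hcq⟩ := not_forall.mp hj
  obtain ⟨p⟩ := D.isTree.connected.preconnected i j
  refine D.bag_conn x i j hxi hxj p.bypass p.bypass_isPath c ?_
  have hc := hi (q.append p.bypass.reverse)
  rw [SimpleGraph.Walk.mem_support_append_iff, SimpleGraph.Walk.support_reverse,
    List.mem_reverse] at hc
  exact hc.resolve_left hcq

theorem mem_bag_of_adj_of_inSubtree_of_not_inSubtree {r c i j : ι} (hrc : D.tree.Adj r c)
    (hi : D.InSubtree r c i) (hj : ¬ D.InSubtree r c j) {x : V} (hxi : x ∈ D.bag i)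
    (hxj : x ∈ D.bag j) : x ∈ D.bag r := by
  classical
  obtain ⟨q, hcq⟩ := not_forall.mp hj
  have hcq' : c ∉ q.bypass.support := fun h => hcq (q.support_bypass_subset_support h)
  have hpath : (SimpleGraph.Walk.cons hrc.symm q.bypass).IsPath :=
    (SimpleGraph.Walk.cons_isPath_iff _ _).mpr ⟨q.bypass_isPath, hcq'⟩
  exact D.bag_conn x c j (D.mem_bag_of_inSubtree_of_not_inSubtree hi hj hxi hxj) hxj _ hpath r
    (by simp)

theorem exists_mem_bag_inter_of_adj (hconn : G.Connected) {r c : ι} (hrc : D.tree.Adj r c)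
    {u v : V} (hu : u ∈ D.bag r) (hv : v ∈ D.bag c) : ∃ w, w ∈ D.bag r ∧ w ∈ D.bag c := by
  set S : Set V := {x | ∃ j, D.InSubtree r c j ∧ x ∈ D.bag j}
  have hr_out : ¬ D.InSubtree r c r := fun h =>
    hrc.ne (List.mem_singleton.mp (h .nil)).symm
  have mem_inter_of_mem_S {x : V} (hx : x ∈ S) {j : ι} (hj : ¬ D.InSubtree r c j)
      (hxj : x ∈ D.bag j) : x ∈ D.bag r ∧ x ∈ D.bag c := by
    obtain ⟨i, hi, hxi⟩ := hx
    exact ⟨D.mem_bag_of_adj_of_inSubtree_of_not_inSubtree hrc hi hj hxi hxj,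
      D.mem_bag_of_inSubtree_of_not_inSubtree hi hj hxi hxj⟩
  by_cases huS : u ∈ S
  · exact ⟨u, mem_inter_of_mem_S huS hr_out hu⟩
  have hvS : v ∈ S := ⟨c, fun p => p.end_mem_support, hv⟩
  obtain ⟨d, -, hd_in, hd_out⟩ := (hconn v u).some.exists_boundary_dart S hvS huS
  obtain ⟨k, hk₁, hk₂⟩ := D.bag_edge _ _ d.adj
  have hk : ¬ D.InSubtree r c k := fun hk => hd_out ⟨k, hk, hk₂⟩
  exact ⟨d.fst, mem_inter_of_mem_S hd_in hk hk₁⟩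

end TreeDecomp

theorem ancestor_bag_dist_bound_general {V ι : Type}
    (G : SimpleGraph V) (hconn : G.Connected) (D : TreeDecomp G ι)
    (tl : ℕ) (hlen : D.LengthLE tl) (g : ℕ) (hg : 1 ≤ g) (t : V)
    (B' : ι) (C : ι) (hadj : D.tree.Adj B' C)
    (hv : ∃ v ∈ D.bag C, G.dist v t ≤ g - 1) :
    ∀ u ∈ D.bag B', G.dist u t ≤ g + 2 * tl - 1 := by
  obtain ⟨v, hvC, hvt⟩ := hv
  intro u huB'
  obtain ⟨w, hwB', hwC⟩ := D.exists_mem_bag_inter_of_adj hconn hadj huB' hvC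
  calc G.dist u t ≤ G.dist u w + (G.dist w v + G.dist v t) :=
        hconn.dist_triangle.trans (Nat.add_le_add_left hconn.dist_triangle _)
    _ ≤ tl + (tl + (g - 1)) :=
        Nat.add_le_add (hlen B' u huB' w hwB') (Nat.add_le_add (hlen C w hwC v hvC) hvt)
    _ = g + 2 * tl - 1 := by omega

/-- Let `T` be a trimmed rooted tree decomposition of a finite connected graph `G`
of length at most `tl`, let `g ≥ 1`, let `t ∈ B`, and let `B'` be a strict ancestor
of `B` such that the child `C` of `B'` on the path from `B` to `B'` contains a
vertex `v` with `dist(v, t) ≤ g - 1`. Then every `u ∈ B'` satisfies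
`dist(u, t) ≤ g + 2·tl - 1`. -/
theorem ancestor_bag_dist_bound {V ι : Type} [Fintype V] [Fintype ι]
    (G : SimpleGraph V) (hconn : G.Connected) (D : TreeDecomp G ι) (root : ι)
    (htrim : D.Trimmed root) (tl : ℕ) (hlen : D.LengthLE tl)
    (g : ℕ) (hg : 1 ≤ g) (t : V) (B : ι) (ht : t ∈ D.bag B)
    (B' : ι) (hanc : D.InSubtree root B' B) (hne : B' ≠ B)
    (C : ι) (hadj : D.tree.Adj B' C)
    (hCpath : ∀ p : D.tree.Walk B B', C ∈ p.support)
    (hv : ∃ v ∈ D.bag C, G.dist v t ≤ g - 1) :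
    ∀ u ∈ D.bag B', G.dist u t ≤ g + 2 * tl - 1 :=
  ancestor_bag_dist_bound_general G hconn D tl hlen g hg t B' C hadj hv
end
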